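/- arXiv:2502.11226 — 2 statements merged into one kernel-verified Lean document; each statement's English description precedes it below -/
import Mathlib

section
/- Let E be a finite directed graph and T_E its talented monoid. Then every element x ∈ T_E can be written as x = Σ_{i=1}^n v_i(n_i) where each n_i ∈ ℤ and each vertex v_i is either a sink of E or lies on a cycle of E. -/
/-! Directed graphs are given by types `V` (vertices), `E` (edges) and maps
`s r : E → V` (source and range). -/

/-- `PathTo s r u v l` : the list of edges `l` is a path from `u` to `v`
(the empty list is the trivial path at `u = v`). -/
inductive PathTo {V E : Type*} (s r : E → V) : V → V → List E → Prop
  | nil (v : V) : PathTo s r v v []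
  | cons (e : E) {w : V} {l : List E} :
      PathTo s r (r e) w l → PathTo s r (s e) w (e :: l)

variable {V E : Type*}

/-- `u ≥ v` : there is a finite path from `u` to `v`. -/
def Reach (s r : E → V) (u v : V) : Prop := ∃ l : List E, PathTo s r u v l

/-- A subset of vertices is hereditary if it is closed under ranges of edges. -/
def Hereditary (s r : E → V) (H : Set V) : Prop := ∀ e : E, s e ∈ H → r e ∈ H

/-- A subset of vertices is saturated if it contains every regular vertex all of
whose out-neighbours lie in the set. -/
def Saturated (s r : E → V) (H : Set V) : Prop :=
  ∀ v : V, (∃ e, s e = v) → (∀ e, s e = v → r e ∈ H) → v ∈ H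

/-- `R(H)` : the set of vertices from which there is a finite path into `H`. -/
def ReachSet (s r : E → V) (H : Set V) : Set V := {u : V | ∃ v ∈ H, Reach s r u v}

/-- `T(w)` : the tree rooted at `w`, i.e. the set of vertices reachable from `w`. -/
def TreeOf (s r : E → V) (w : V) : Set V := {v : V | Reach s r w v}

/-- `H^⊥ = E⁰ \ R(H)`. -/
def Hperp (s r : E → V) (H : Set V) : Set V := Set.univ \ ReachSet s r H

/-- The hereditary and saturated closure of a set of vertices. -/
def HSClosure (s r : E → V) (X : Set V) : Set V :=
  ⋂₀ {S : Set V | X ⊆ S ∧ Hereditary s r S ∧ Saturated s r S}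

/-- A cycle: a nonempty closed path whose edges have pairwise distinct sources. -/
def IsCycle (s r : E → V) (l : List E) : Prop :=
  ∃ v : V, l ≠ [] ∧ PathTo s r v v l ∧ (l.map s).Nodup

/-- A path (given as a nonempty list of edges starting at `w`) flows to `H` if its
last edge has source outside `H` and range inside `H`. -/
def FlowsTo (s r : E → V) (H : Set V) (w : V) (l : List E) : Prop :=
  (∃ u : V, PathTo s r w u l) ∧ ∃ e : E, l.getLast? = some e ∧ s e ∉ H ∧ r e ∈ H

/-! ### The talented monoid of a row-finite graph -/

/-- The free commutative monoid on `V × ℤ`. -/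
abbrev FreeTal (V : Type*) := (V × ℤ) →₀ ℕ

/-- The defining relations of the talented monoid:
`v(i) = Σ_{e ∈ s⁻¹(v)} r(e)(i+1)` for every regular vertex `v` and `i ∈ ℤ`. -/
def talRel {V E : Type*} (s r : E → V) (hrow : ∀ v : V, {e : E | s e = v}.Finite) :
    FreeTal V → FreeTal V → Prop := fun x y =>
  ∃ (v : V) (i : ℤ), (∃ e, s e = v) ∧ x = Finsupp.single (v, i) 1 ∧
    y = ∑ e ∈ (hrow v).toFinset, Finsupp.single (r e, i + 1) 1

/-- The congruence generated by the defining relations. -/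
noncomputable def talCon {V E : Type*} (s r : E → V) (hrow : ∀ v : V, {e : E | s e = v}.Finite) :
    AddCon (FreeTal V) := addConGen (talRel s r hrow)

/-- The talented monoid `T_E` of a row-finite graph. -/
abbrev TalMon {V E : Type*} (s r : E → V) (hrow : ∀ v : V, {e : E | s e = v}.Finite) :=
  (talCon s r hrow).Quotient

/-- The generator `v(i)` of the talented monoid, for `p = (v, i)`. -/
noncomputable def talGen {V E : Type*} (s r : E → V) (hrow : ∀ v : V, {e : E | s e = v}.Finite)
    (p : V × ℤ) : TalMon s r hrow :=
  (talCon s r hrow).mk' (Finsupp.single p 1)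

section OrderNotions

variable {M : Type*} [AddCommMonoid M]

/-- The algebraic preorder: `a ≤ b` iff `b = a + c` for some `c`. -/
def AlgLE (a b : M) : Prop := ∃ c, b = a + c

/-- Strict algebraic order: `a < b` iff `b = a + c` for some nonzero `c`. -/
def AlgLT (a b : M) : Prop := ∃ c, c ≠ 0 ∧ b = a + c

/-- Comparability with respect to the algebraic order. -/
def CmpRel (a b : M) : Prop := a = b ∨ AlgLT a b ∨ AlgLT b a

/-- The orthogonal set `I^⊥ = {a | a ∥ I} ∪ {0}`. -/
def perpSet (I : Set M) : Set M :=
  {a : M | a = 0 ∨ ∀ x ∈ I, x ≠ 0 → ¬ CmpRel a x}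

end OrderNotions

/-- The ℤ-order ideal `⟨H⟩` of the talented monoid generated by a set of vertices `H`:
all elements below a finite sum of shifted generators `v(i)`, `v ∈ H`. -/
def genIdeal {V E : Type*} (s r : E → V) (hrow : ∀ v : V, {e : E | s e = v}.Finite)
    (H : Set V) : Set (TalMon s r hrow) :=
  {x | ∃ l : List (V × ℤ), (∀ p ∈ l, p.1 ∈ H) ∧
    AlgLE x (l.map (talGen s r hrow)).sum}

/-! A nonempty closed path contains a cycle, so a path through vertices that are neither sinks
nor on cycles never returns: the relation "`w` is the range of an edge whose source `v` is
neither a sink nor on a cycle" is well founded on the finite vertex set. Induction along it,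
using `v(i) = Σ_{e ∈ s⁻¹(v)} r(e)(i+1)` at each such (necessarily regular) vertex, writes every
generator `v(i)`, hence every element of `T_E`, as a sum of generators at sinks and at vertices
on cycles. -/

variable {s r : E → V}

namespace PathTo

theorem cons_iff {u w : V} {e : E} {l : List E} :
    PathTo s r u w (e :: l) ↔ u = s e ∧ PathTo s r (r e) w l := by
  constructor
  · intro h
    cases h with
    | cons _ h => exact ⟨rfl, h⟩
  · rintro ⟨rfl, h⟩
    exact .cons e h

theorem of_append {u w : V} {l₁ l₂ : List E} (h : PathTo s r u w (l₁ ++ l₂)) :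
    ∃ m, PathTo s r u m l₁ ∧ PathTo s r m w l₂ := by
  induction l₁ generalizing u with
  | nil => exact ⟨u, .nil u, h⟩
  | cons e l₁ ih =>
    obtain ⟨rfl, h'⟩ := cons_iff.mp h
    obtain ⟨m, h₁, h₂⟩ := ih h'
    exact ⟨m, .cons e h₁, h₂⟩

end PathTo

theorem List.exists_eq_append_cons_append_cons_of_not_nodup_map {α β : Type*} (f : α → β)
    {l : List α} (h : ¬ (l.map f).Nodup) :
    ∃ l₁ a l₂ b l₃, l = l₁ ++ a :: (l₂ ++ b :: l₃) ∧ f a = f b := by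
  induction l with
  | nil => simp at h
  | cons a l ih =>
    by_cases ha : f a ∈ l.map f
    · obtain ⟨b, hb, hab⟩ := List.mem_map.mp ha
      obtain ⟨l₂, l₃, rfl⟩ := List.append_of_mem hb
      exact ⟨[], a, l₂, b, l₃, rfl, hab.symm⟩
    · obtain ⟨l₁, a', l₂, b, l₃, rfl, hab⟩ := ih fun hl => h (List.nodup_cons.mpr ⟨ha, hl⟩)
      exact ⟨a :: l₁, a', l₂, b, l₃, rfl, hab⟩

/-- If the sources along a closed path repeat, say `s e = s e'` with `e` before `e'`, then the
edges from `e` up to (excluding) `e'` form a shorter closed path. -/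
theorem exists_isCycle_subset_of_pathTo {v : V} {l : List E} (hl : l ≠ []) (h : PathTo s r v v l) :
    ∃ c, IsCycle s r c ∧ c ⊆ l := by
  by_cases hnd : (l.map s).Nodup
  · exact ⟨l, ⟨v, hl, h, hnd⟩, List.Subset.refl l⟩
  obtain ⟨l₁, e, l₂, e', l₃, hsplit, hee'⟩ :=
    List.exists_eq_append_cons_append_cons_of_not_nodup_map s hnd
  obtain ⟨_, -, h₁⟩ := PathTo.of_append (hsplit ▸ h)
  obtain ⟨rfl, h₂⟩ := PathTo.cons_iff.mp h₁
  obtain ⟨_, h₃, h₄⟩ := PathTo.of_append h₂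
  obtain ⟨rfl, -⟩ := PathTo.cons_iff.mp h₄
  have hloop : PathTo s r (s e) (s e) (e :: l₂) := .cons e (hee' ▸ h₃)
  obtain ⟨c, hc, hsub⟩ := exists_isCycle_subset_of_pathTo (List.cons_ne_nil e l₂) hloop
  refine ⟨c, hc, List.Subset.trans hsub fun f hf => ?_⟩
  rw [hsplit]
  simp only [List.mem_cons, List.mem_append] at hf ⊢
  tauto
termination_by l.length
decreasing_by rw [hsplit]; simp only [List.length_append, List.length_cons]; omega

theorem IsCycle.ne_nil {c : List E} (hc : IsCycle s r c) : c ≠ [] :=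
  let ⟨_, hne, _⟩ := hc
  hne

variable (s r) in
def IsSinkOrOnCycle (v : V) : Prop :=
  (¬ ∃ e, s e = v) ∨ ∃ c : List E, IsCycle s r c ∧ ∃ e ∈ c, s e = v

variable (s r) in
def OffCycleStep (w v : V) : Prop :=
  ¬ IsSinkOrOnCycle s r v ∧ ∃ e, s e = v ∧ r e = w

theorem exists_pathTo_of_transGen_offCycleStep {w v : V}
    (h : Relation.TransGen (OffCycleStep s r) w v) :
    ∃ l : List E, l ≠ [] ∧ PathTo s r v w l ∧ ∀ e ∈ l, ¬ IsSinkOrOnCycle s r (s e) := by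
  induction h with
  | single hstep =>
    obtain ⟨hv, e, rfl, rfl⟩ := hstep
    exact ⟨[e], List.cons_ne_nil _ _, .cons e (.nil _), by simpa using hv⟩
  | tail _ hstep ih =>
    obtain ⟨l, -, hl, hoff⟩ := ih
    obtain ⟨hv, e, rfl, rfl⟩ := hstep
    refine ⟨e :: l, List.cons_ne_nil _ _, .cons e hl, ?_⟩
    simpa using ⟨hv, hoff⟩

variable (s r) in
theorem offCycleStep_wellFounded [Finite V] : WellFounded (OffCycleStep s r) := by
  have : Std.Irrefl (Relation.TransGen (OffCycleStep s r)) := by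
    refine ⟨fun v hv => ?_⟩
    obtain ⟨l, hl, hpath, hoff⟩ := exists_pathTo_of_transGen_offCycleStep hv
    obtain ⟨c, hc, hsub⟩ := exists_isCycle_subset_of_pathTo hl hpath
    obtain ⟨e, he⟩ := List.exists_mem_of_ne_nil c hc.ne_nil
    exact hoff e (hsub he) (.inr ⟨c, hc, e, he, rfl⟩)
  exact Subrelation.wf Relation.TransGen.single (Finite.wellFounded_of_trans_of_irrefl _)

section TalentedMonoid

variable (hrow : ∀ v : V, {e : E | s e = v}.Finite)

theorem talGen_eq_sum {v : V} (hv : ∃ e, s e = v) (i : ℤ) :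
    talGen s r hrow (v, i) = ∑ e ∈ (hrow v).toFinset, talGen s r hrow (r e, i + 1) := by
  have hquot : (talCon s r hrow).mk' (Finsupp.single (v, i) 1) =
      (talCon s r hrow).mk' (∑ e ∈ (hrow v).toFinset, Finsupp.single (r e, i + 1) 1) :=
    (AddCon.eq _).mpr (AddConGen.Rel.of _ _ ⟨v, i, hv, rfl, rfl⟩)
  rw [talGen, hquot, map_sum]
  rfl

theorem TalMon.mem_of_forall_talGen_mem {S : AddSubmonoid (TalMon s r hrow)}
    (hS : ∀ p, talGen s r hrow p ∈ S) (x : TalMon s r hrow) : x ∈ S := by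
  obtain ⟨f, rfl⟩ := AddCon.mk'_surjective x
  rw [← f.sum_single, Finsupp.sum, map_sum]
  refine sum_mem fun p _ => ?_
  rw [← Finsupp.smul_single_one, map_nsmul]
  exact nsmul_mem (hS p) _

def sinkOrCycleSums : AddSubmonoid (TalMon s r hrow) where
  carrier := {x | ∃ l : List (V × ℤ), (∀ p ∈ l, IsSinkOrOnCycle s r p.1) ∧
    x = (l.map (talGen s r hrow)).sum}
  zero_mem' := ⟨[], by simp, by simp⟩
  add_mem' := by
    rintro _ _ ⟨l₁, h₁, rfl⟩ ⟨l₂, h₂, rfl⟩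
    exact ⟨l₁ ++ l₂, fun p hp => (List.mem_append.mp hp).elim (h₁ p) (h₂ p), by simp⟩

theorem talGen_mem_sinkOrCycleSums [Finite V] (p : V × ℤ) :
    talGen s r hrow p ∈ sinkOrCycleSums hrow := by
  obtain ⟨v, i⟩ := p
  induction v using (offCycleStep_wellFounded s r).induction generalizing i with
  | _ v ih =>
    by_cases hv : IsSinkOrOnCycle s r v
    · exact ⟨[(v, i)], by simpa using hv, by simp⟩
    have hreg : ∃ e, s e = v := not_not.mp fun h => hv (.inl h)
    rw [talGen_eq_sum hrow hreg]
    refine sum_mem fun e he => ih (r e) ⟨hv, e, ?_, rfl⟩ (i + 1)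
    simpa using he

end TalentedMonoid

theorem stmt_9_general {V E : Type*} [Finite V] (s r : E → V)
    (hrow : ∀ v : V, {e : E | s e = v}.Finite)
    (x : TalMon s r hrow) :
    ∃ l : List (V × ℤ),
      (∀ p ∈ l, (¬ ∃ e, s e = p.1) ∨ ∃ c : List E, IsCycle s r c ∧ ∃ e ∈ c, s e = p.1) ∧
      x = (l.map (talGen s r hrow)).sum :=
  TalMon.mem_of_forall_talGen_mem hrow (talGen_mem_sinkOrCycleSums hrow) x

theorem stmt_9 {V E : Type*} [Finite V] [Finite E] (s r : E → V)
    (hrow : ∀ v : V, {e : E | s e = v}.Finite)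
    (x : TalMon s r hrow) :
    ∃ l : List (V × ℤ),
      (∀ p ∈ l, (¬ ∃ e, s e = p.1) ∨ ∃ c : List E, IsCycle s r c ∧ ∃ e ∈ c, s e = p.1) ∧
      x = (l.map (talGen s r hrow)).sum :=
  stmt_9_general s r hrow x
end

section
/- Let E be a row-finite graph. The talented monoid T_E is decomposable (i.e., T_E = I ⊕ J for nontrivial ℤ-order ideals I, J) if and only if there exist nontrivial hereditary saturated subsets H and K of E⁰ with H ∩ K = ∅ such that for every vertex v ∈ E⁰ \ (H ∪ K) there is a nonzero but finite number of paths starting at v that flow to H ∪ K. -/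
variable {V E : Type*}

/-- The shift by `n` on the free commutative monoid on `V × ℤ`. -/
noncomputable def shiftFree (V : Type*) (n : ℤ) : FreeTal V →+ FreeTal V :=
  Finsupp.mapDomain.addMonoidHom (fun p : V × ℤ => (p.1, p.2 + n))

/-- The shift by `n` on the talented monoid, defining the action of ℤ. -/
noncomputable def shiftTal {V E : Type*} (s r : E → V)
    (hrow : ∀ v : V, {e : E | s e = v}.Finite) (n : ℤ) :
    TalMon s r hrow →+ TalMon s r hrow :=
  AddCon.lift _ ((talCon s r hrow).mk'.comp (shiftFree V n)) (by
    refine AddCon.addConGen_le.mpr ?_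
    rintro x y ⟨v, i, hv, rfl, rfl⟩
    have h1 : (shiftFree V n) (Finsupp.single (v, i) 1) = Finsupp.single (v, i + n) 1 := by
      simp [shiftFree, Finsupp.mapDomain_single]
    have h2 : (shiftFree V n) (∑ e ∈ (hrow v).toFinset, Finsupp.single (r e, i + 1) 1)
        = ∑ e ∈ (hrow v).toFinset, Finsupp.single (r e, (i + n) + 1) 1 := by
      rw [map_sum]
      refine Finset.sum_congr rfl fun e _ => ?_
      simp [shiftFree, Finsupp.mapDomain_single]
      ring_nf
    rw [AddCon.ker_rel, AddMonoidHom.comp_apply, AddMonoidHom.comp_apply, h1, h2]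
    exact (AddCon.eq _).mpr (AddConGen.Rel.of _ _ ⟨v, i + n, hv, rfl, rfl⟩))

/-- A ℤ-order ideal of the talented monoid: a downward closed, shift-invariant
submonoid. -/
def IsZOrderIdeal {V E : Type*} (s r : E → V)
    (hrow : ∀ v : V, {e : E | s e = v}.Finite) (I : Set (TalMon s r hrow)) : Prop :=
  (0 : TalMon s r hrow) ∈ I ∧
    (∀ a b, a ∈ I → b ∈ I → a + b ∈ I) ∧
    (∀ a b, b ∈ I → AlgLE a b → a ∈ I) ∧
    ∀ (n : ℤ) (x), x ∈ I → shiftTal s r hrow n x ∈ I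

/-!
Read the relations `v(i) = Σ_{s(e) = v} r(e)(i+1)` as rewriting rules on the free commutative
monoid on `E⁰ × ℤ`. Expansions at different generators commute, so two words are equal in `T_E`
iff they have a common expansion. A ℤ-order ideal `I` gives the hereditary saturated set
`I ∩ E⁰`, and the elements of `⟨H⟩` are those that expand into generators over `H`. Hence
`T_E = I ⊕ J` means that every generator expands into `H ∪ K`, where `H = I ∩ E⁰` and
`K = J ∩ E⁰`, and conversely such expansions split every element between `⟨H⟩` and `⟨K⟩`,
while confluence makes `⟨H⟩ ∩ ⟨K⟩ = 0` when `H ∩ K = ∅`. Finally, for hereditary `S`, every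
generator expands into `S` iff from every vertex outside `S` there are finitely many, but at
least one, paths flowing to `S`.
-/

open Finsupp

theorem AlgLE.trans {M : Type*} [AddCommMonoid M] {a b c : M} (hab : AlgLE a b)
    (hbc : AlgLE b c) : AlgLE a c := by
  obtain ⟨d, rfl⟩ := hab
  obtain ⟨d', rfl⟩ := hbc
  exact ⟨d + d', add_assoc a d d'⟩

theorem AlgLE.add {M : Type*} [AddCommMonoid M] {a b c d : M} (hab : AlgLE a b)
    (hcd : AlgLE c d) : AlgLE (a + c) (b + d) := by
  obtain ⟨x, rfl⟩ := hab
  obtain ⟨y, rfl⟩ := hcd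
  exact ⟨x + y, add_add_add_comm a x c y⟩

theorem AlgLE.map {M N : Type*} [AddCommMonoid M] [AddCommMonoid N] (f : M →+ N) {a b : M}
    (h : AlgLE a b) : AlgLE (f a) (f b) := by
  obtain ⟨c, rfl⟩ := h
  exact ⟨f c, map_add f a c⟩

theorem Hereditary.union {s r : E → V} {H K : Set V} (hH : Hereditary s r H)
    (hK : Hereditary s r K) : Hereditary s r (H ∪ K) :=
  fun e he => he.imp (hH e) (hK e)

namespace TalentedMonoid

variable {s r : E → V} {hrow : ∀ v : V, {e : E | s e = v}.Finite}

noncomputable def expand (s r : E → V) (hrow : ∀ v : V, {e : E | s e = v}.Finite) (v : V)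
    (i : ℤ) : FreeTal V :=
  ∑ e ∈ (hrow v).toFinset, single (r e, i + 1) 1

def Step (s r : E → V) (hrow : ∀ v : V, {e : E | s e = v}.Finite) (x y : FreeTal V) : Prop :=
  ∃ (v : V) (i : ℤ), (∃ e, s e = v) ∧ single (v, i) 1 ≤ x ∧
    y = x - single (v, i) 1 + expand s r hrow v i

abbrev Steps (s r : E → V) (hrow : ∀ v : V, {e : E | s e = v}.Finite) :
    FreeTal V → FreeTal V → Prop :=
  Relation.ReflTransGen (Step s r hrow)

theorem Step.add_right {x y : FreeTal V} (h : Step s r hrow x y) (c : FreeTal V) :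
    Step s r hrow (x + c) (y + c) := by
  obtain ⟨v, i, hv, hle, rfl⟩ := h
  refine ⟨v, i, hv, hle.trans le_self_add, ?_⟩
  rw [← tsub_add_eq_add_tsub hle, add_right_comm]

theorem Steps.add_right {x y : FreeTal V} (h : Steps s r hrow x y) (c : FreeTal V) :
    Steps s r hrow (x + c) (y + c) :=
  Relation.ReflTransGen.lift (· + c) (fun _ _ h => h.add_right c) _ _ h

theorem Steps.add {x y x' y' : FreeTal V} (hx : Steps s r hrow x x') (hy : Steps s r hrow y y') :
    Steps s r hrow (x + y) (x' + y') := by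
  refine (hx.add_right y).trans ?_
  simpa only [add_comm x'] using hy.add_right x'

theorem Step.add_split {x c u : FreeTal V} (h : Step s r hrow (x + c) u) :
    (∃ x', Step s r hrow x x' ∧ u = x' + c) ∨ ∃ c', Step s r hrow c c' ∧ u = x + c' := by
  obtain ⟨v, i, hv, hle, rfl⟩ := h
  have hsum : 1 ≤ x (v, i) + c (v, i) := by simpa using single_le_iff.mp hle
  by_cases hx : 1 ≤ x (v, i)
  · have hx : single (v, i) 1 ≤ x := single_le_iff.mpr hx
    exact .inl ⟨_, ⟨v, i, hv, hx, rfl⟩, by rw [← tsub_add_eq_add_tsub hx, add_right_comm]⟩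
  · have hc : single (v, i) 1 ≤ c := single_le_iff.mpr (by omega)
    exact .inr ⟨_, ⟨v, i, hv, hc, rfl⟩, by rw [add_tsub_assoc_of_le hc, add_assoc]⟩

theorem Steps.add_split {x c u : FreeTal V} (h : Steps s r hrow (x + c) u) :
    ∃ x' c', Steps s r hrow x x' ∧ Steps s r hrow c c' ∧ u = x' + c' := by
  induction h with
  | refl => exact ⟨x, c, .refl, .refl, rfl⟩
  | tail _ hstep ih =>
    obtain ⟨x', c', hx, hc, rfl⟩ := ih
    rcases hstep.add_split with ⟨x'', h, rfl⟩ | ⟨c'', h, rfl⟩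
    · exact ⟨x'', c', hx.tail h, hc, rfl⟩
    · exact ⟨x', c'', hx, hc.tail h, rfl⟩

theorem single_le_tsub_single {x : FreeTal V} {p q : V × ℤ} (hpq : p ≠ q)
    (hq : single q 1 ≤ x) : single q 1 ≤ x - single p 1 := by
  rw [single_le_iff] at hq ⊢
  simpa [single_apply, hpq] using hq

theorem Step.diamond {x y y' : FreeTal V} (h : Step s r hrow x y) (h' : Step s r hrow x y') :
    ∃ w, Relation.ReflGen (Step s r hrow) y w ∧ Steps s r hrow y' w := by
  obtain ⟨v, i, hv, hle, rfl⟩ := h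
  obtain ⟨v', i', hv', hle', rfl⟩ := h'
  by_cases hp : (v, i) = (v', i')
  · obtain ⟨rfl, rfl⟩ := Prod.mk.inj hp
    exact ⟨_, .refl, .refl⟩
  have hle₁ := single_le_tsub_single hp hle'
  have hle₂ := single_le_tsub_single (Ne.symm hp) hle
  refine ⟨x - single (v, i) 1 - single (v', i') 1 + expand s r hrow v i + expand s r hrow v' i',
    .single ⟨v', i', hv', hle₁.trans le_self_add, ?_⟩,
    .single ⟨v, i, hv, hle₂.trans le_self_add, ?_⟩⟩
  · rw [tsub_add_eq_add_tsub hle₁]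
  · rw [← tsub_add_eq_add_tsub hle₂, tsub_right_comm, add_right_comm]

theorem Steps.join {x y y' : FreeTal V} (h : Steps s r hrow x y) (h' : Steps s r hrow x y') :
    ∃ w, Steps s r hrow y w ∧ Steps s r hrow y' w :=
  Relation.church_rosser (fun _ _ _ => Step.diamond) h h'

theorem talCon_of_step {x y : FreeTal V} (h : Step s r hrow x y) : talCon s r hrow x y := by
  obtain ⟨v, i, hv, hle, rfl⟩ := h
  have hrel : talCon s r hrow (single (v, i) 1) (expand s r hrow v i) :=
    AddConGen.Rel.of _ _ ⟨v, i, hv, rfl, rfl⟩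
  have := (talCon s r hrow).add hrel ((talCon s r hrow).refl (x - single (v, i) 1))
  rwa [add_tsub_cancel_of_le hle, add_comm] at this

theorem talCon_iff_join {x y : FreeTal V} :
    talCon s r hrow x y ↔ ∃ z, Steps s r hrow x z ∧ Steps s r hrow y z := by
  constructor
  · let join : AddCon (FreeTal V) :=
      { r := fun a b => ∃ z, Steps s r hrow a z ∧ Steps s r hrow b z
        iseqv := ⟨fun a => ⟨a, .refl, .refl⟩, fun ⟨z, ha, hb⟩ => ⟨z, hb, ha⟩,
          fun ⟨z, ha, hb⟩ ⟨z', hb', hc⟩ =>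
            let ⟨w, hzw, hz'w⟩ := hb.join hb'
            ⟨w, ha.trans hzw, hc.trans hz'w⟩⟩
        add' := fun ⟨z, ha, hb⟩ ⟨z', hc, hd⟩ => ⟨z + z', ha.add hc, hb.add hd⟩ }
    refine fun h => (AddCon.addConGen_le (c := join)).mpr ?_ h
    rintro _ _ ⟨v, i, hv, rfl, rfl⟩
    exact ⟨_, .single ⟨v, i, hv, le_rfl, by simp [expand]⟩, .refl⟩
  · rintro ⟨z, hx, hy⟩
    have of_steps : ∀ {a b}, Steps s r hrow a b → talCon s r hrow a b := by
      intro a b h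
      induction h with
      | refl => exact (talCon s r hrow).refl a
      | tail _ hstep ih => exact (talCon s r hrow).trans ih (talCon_of_step hstep)
    exact (talCon s r hrow).trans (of_steps hx) ((talCon s r hrow).symm (of_steps hy))

variable (s r hrow) in
theorem mk_eq_mk_iff {x y : FreeTal V} :
    (talCon s r hrow).mk' x = (talCon s r hrow).mk' y ↔
      ∃ z, Steps s r hrow x z ∧ Steps s r hrow y z :=
  (AddCon.eq _).trans talCon_iff_join

theorem exists_steps_of_algLE_mk {x y : FreeTal V}
    (h : AlgLE ((talCon s r hrow).mk' x) ((talCon s r hrow).mk' y)) :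
    ∃ x' d, Steps s r hrow x x' ∧ Steps s r hrow y (x' + d) := by
  obtain ⟨c, hc⟩ := h
  obtain ⟨c, rfl⟩ := AddCon.mk'_surjective c
  rw [← map_add] at hc
  obtain ⟨z, hy, hxc⟩ := (mk_eq_mk_iff s r hrow).mp hc
  obtain ⟨x', c', hx, -, rfl⟩ := hxc.add_split
  exact ⟨x', c', hx, hy⟩

abbrev SupportedOver (S : Set V) : Submodule ℕ (FreeTal V) :=
  supported ℕ ℕ (Prod.fst ⁻¹' S)

theorem mem_supportedOver_of_le {S : Set V} {x y : FreeTal V} (h : x ≤ y)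
    (hy : y ∈ SupportedOver S) : x ∈ SupportedOver S :=
  (mem_supported _ _).mpr ((Finset.coe_subset.mpr (support_mono h)).trans
    ((mem_supported _ _).mp hy))

theorem single_mem_supportedOver_iff {S : Set V} {p : V × ℤ} :
    single p 1 ∈ SupportedOver S ↔ p.1 ∈ S := by
  simp [mem_supported]

theorem expand_mem_supportedOver {S : Set V} (hS : Hereditary s r S) {v : V} (hv : v ∈ S)
    (i : ℤ) : expand s r hrow v i ∈ SupportedOver S :=
  Submodule.sum_mem _ fun e he =>
    single_mem_supported ℕ 1 (hS e (by rwa [(hrow v).mem_toFinset.mp he]))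

theorem Steps.mem_supportedOver {S : Set V} (hS : Hereditary s r S) {x y : FreeTal V}
    (h : Steps s r hrow x y) (hx : x ∈ SupportedOver S) : y ∈ SupportedOver S := by
  induction h with
  | refl => exact hx
  | tail _ hstep ih =>
    obtain ⟨v, i, -, hle, rfl⟩ := hstep
    exact add_mem (mem_supportedOver_of_le tsub_le_self ih) (expand_mem_supportedOver hS
      (single_mem_supportedOver_iff.mp (mem_supportedOver_of_le hle ih)) i)

noncomputable def weight (w : V → ℕ∞) : FreeTal V →+ ℕ∞ :=
  liftAddHom fun p => (AddMonoidHom.mulRight (w p.1)).comp (Nat.castAddMonoidHom ℕ∞)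

theorem weight_apply (w : V → ℕ∞) (x : FreeTal V) :
    weight w x = ∑ p ∈ x.support, (x p : ℕ∞) * w p.1 :=
  liftAddHom_apply _ x

theorem weight_single (w : V → ℕ∞) (p : V × ℤ) (n : ℕ) :
    weight w (single p n) = n * w p.1 :=
  liftAddHom_apply_single _ p n

theorem weight_expand (w : V → ℕ∞) (v : V) (i : ℤ) :
    weight w (expand s r hrow v i) = ∑ e ∈ (hrow v).toFinset, w (r e) := by
  simp [expand, weight_single]

theorem Steps.weight_le {x y : FreeTal V} (h : Steps s r hrow x y) {w : V → ℕ∞}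
    (hw : ∀ v, (∃ e, s e = v) → w v ≤ ∑ e ∈ (hrow v).toFinset, w (r e)) :
    weight w x ≤ weight w y := by
  induction h with
  | refl => exact le_rfl
  | tail _ hstep ih =>
    obtain ⟨v, i, hv, hle, rfl⟩ := hstep
    refine ih.trans ?_
    calc weight w _ = weight w (single (v, i) 1) + weight w (_ - single (v, i) 1) := by
          rw [← map_add, add_tsub_cancel_of_le hle]
      _ ≤ weight w (expand s r hrow v i) + weight w (_ - single (v, i) 1) := by
          rw [weight_single, weight_expand, Nat.cast_one, one_mul]
          exact add_le_add_left (hw v hv) _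
      _ = _ := by rw [← map_add, add_comm]

theorem weight_ne_top {w : V → ℕ∞} {x : FreeTal V} (h : ∀ p ∈ x.support, w p.1 ≠ ⊤) :
    weight w x ≠ ⊤ := by
  rw [weight_apply]
  exact ENat.sum_ne_top.mpr fun p hp => WithTop.mul_ne_top (ENat.natCast_ne_top _) (h p hp)

theorem weight_one_le_sum {v : V} (hv : ∃ e, s e = v) :
    (1 : V → ℕ∞) v ≤ ∑ e ∈ (hrow v).toFinset, (1 : V → ℕ∞) (r e) := by
  obtain ⟨e, rfl⟩ := hv
  simpa using Finset.card_pos.mpr ⟨e, (hrow (s e)).mem_toFinset.mpr rfl⟩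

theorem eq_zero_of_steps_zero {x : FreeTal V} (h : Steps s r hrow x 0) : x = 0 := by
  have hle := h.weight_le (w := 1) fun _ => weight_one_le_sum
  rw [map_zero, nonpos_iff_eq_zero, weight_apply, Finset.sum_eq_zero_iff] at hle
  refine support_eq_empty.mp (Finset.eq_empty_of_forall_notMem fun p hp => ?_)
  exact mem_support_iff.mp hp (by simpa using hle p hp)

theorem eq_zero_of_zero_steps {z : FreeTal V} (h : Steps s r hrow 0 z) : z = 0 := by
  induction h with
  | refl => rfl
  | tail _ hstep ih =>
    obtain ⟨v, i, -, hle, -⟩ := hstep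
    rw [ih, single_le_iff] at hle
    simp at hle

variable (s r hrow) in
theorem talGen_ne_zero (p : V × ℤ) : talGen s r hrow p ≠ 0 := by
  intro h
  rw [talGen, ← map_zero (talCon s r hrow).mk', mk_eq_mk_iff] at h
  obtain ⟨z, hz, h0⟩ := h
  rw [eq_zero_of_zero_steps h0] at hz
  exact single_ne_zero.mpr one_ne_zero (eq_zero_of_steps_zero hz)

section Flows

variable {S : Set V}

def flowSet (s r : E → V) (S : Set V) (v : V) : Set (List E) := {l | FlowsTo s r S v l}

open Classical in
/-- The admissible tails `l` of a path `e :: l` flowing to `S` with `r e = u`: only `[]` if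
`u ∈ S`, and otherwise the paths from `u` flowing to `S`. -/
def flowTails (s r : E → V) (S : Set V) (u : V) : Set (List E) :=
  if u ∈ S then {[]} else flowSet s r S u

theorem not_flowsTo_nil {v : V} : ¬ FlowsTo s r S v [] := by
  rintro ⟨-, e, he, -⟩
  simp at he

theorem FlowsTo.cons {e : E} {l : List E} (h : FlowsTo s r S (r e) l) :
    FlowsTo s r S (s e) (e :: l) := by
  obtain ⟨⟨u, hp⟩, f, hf, hfS⟩ := h
  refine ⟨⟨u, .cons e hp⟩, f, ?_, hfS⟩
  cases l with
  | nil => simp at hf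
  | cons a t => rwa [List.getLast?_cons_cons]

theorem flowsTo_singleton {e : E} (hs : s e ∉ S) (hr : r e ∈ S) : FlowsTo s r S (s e) [e] :=
  ⟨⟨r e, .cons e (.nil _)⟩, e, rfl, hs, hr⟩

theorem _root_.PathTo.source_mem (hS : Hereditary s r S) {u w : V} {l : List E}
    (h : PathTo s r u w l) (hu : u ∈ S) : ∀ e ∈ l, s e ∈ S := by
  induction h with
  | nil => simp
  | cons e _ ih =>
    intro f hf
    rcases List.mem_cons.mp hf with rfl | hf
    exacts [hu, ih (hS e hu) f hf]

theorem flowsTo_cons_iff (hS : Hereditary s r S) {v : V} {e : E} {l : List E} :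
    FlowsTo s r S v (e :: l) ↔ s e = v ∧ v ∉ S ∧ l ∈ flowTails s r S (r e) := by
  constructor
  · rintro ⟨⟨u, hp⟩, f, hf, hfS, hfr⟩
    cases hp with
    | cons _ hp =>
    refine ⟨rfl, fun hv => hfS ((PathTo.cons e hp).source_mem hS hv f
      (List.mem_of_getLast? hf)), ?_⟩
    cases l with
    | nil =>
      obtain rfl : f = e := by simpa using hf.symm
      rw [flowTails, if_pos hfr]
      exact Set.mem_singleton _
    | cons a t =>
      rw [List.getLast?_cons_cons] at hf
      have hr : r e ∉ S := fun hr => hfS (hp.source_mem hS hr f (List.mem_of_getLast? hf))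
      rw [flowTails, if_neg hr]
      exact ⟨⟨u, hp⟩, f, hf, hfS, hfr⟩
  · rintro ⟨rfl, hv, hl⟩
    unfold flowTails at hl
    split_ifs at hl with hr
    · rw [Set.mem_singleton_iff.mp hl]
      exact flowsTo_singleton hv hr
    · exact FlowsTo.cons hl

theorem flowSet_subset_biUnion (hS : Hereditary s r S) (v : V) :
    flowSet s r S v ⊆ ⋃ e ∈ (hrow v).toFinset, (e :: ·) '' flowTails s r S (r e) := by
  rintro (_ | ⟨e, l⟩) hl
  · exact (not_flowsTo_nil hl).elim
  · obtain ⟨rfl, -, hl⟩ := (flowsTo_cons_iff hS).mp hl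
    exact Set.mem_biUnion ((hrow _).mem_toFinset.mpr rfl) ⟨l, hl, rfl⟩

noncomputable def flowWeight (s r : E → V) (S : Set V) (u : V) : ℕ∞ :=
  (flowTails s r S u).encard

theorem flowWeight_of_mem {u : V} (hu : u ∈ S) : flowWeight s r S u = 1 := by
  simp [flowWeight, flowTails, hu]

theorem flowWeight_of_notMem {u : V} (hu : u ∉ S) :
    flowWeight s r S u = (flowSet s r S u).encard := by
  simp [flowWeight, flowTails, hu]

theorem flowWeight_le_sum (hS : Hereditary s r S) {v : V} (hv : ∃ e, s e = v) :
    flowWeight s r S v ≤ ∑ e ∈ (hrow v).toFinset, flowWeight s r S (r e) := by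
  by_cases hvS : v ∈ S
  · obtain ⟨e, rfl⟩ := hv
    calc flowWeight s r S (s e) = flowWeight s r S (r e) := by
          rw [flowWeight_of_mem hvS, flowWeight_of_mem (hS e hvS)]
      _ ≤ _ := Finset.single_le_sum (f := fun e => flowWeight s r S (r e)) (fun _ _ => zero_le)
          ((hrow _).mem_toFinset.mpr rfl)
  · calc flowWeight s r S v
        ≤ (⋃ e ∈ (hrow v).toFinset, (e :: ·) '' flowTails s r S (r e)).encard := by
          rw [flowWeight_of_notMem hvS]
          exact Set.encard_le_encard (flowSet_subset_biUnion hS v)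
      _ ≤ ∑ e ∈ (hrow v).toFinset, ((e :: ·) '' flowTails s r S (r e)).encard :=
          Finset.set_encard_biUnion_le _ _
      _ ≤ _ := Finset.sum_le_sum fun e _ => Set.encard_image_le _ _

/-- `flowWeight` is subadditive along edges and equals `1` on `S`, so an expansion of `v(i)`
into `S` has at least as many terms as there are flow paths from `v`. -/
theorem finite_flowSet_of_steps (hS : Hereditary s r S) {v : V} (hv : v ∉ S) {i : ℤ}
    {z : FreeTal V} (h : Steps s r hrow (single (v, i) 1) z) (hz : z ∈ SupportedOver S) :
    (flowSet s r S v).Finite := by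
  have hle := h.weight_le fun _ => flowWeight_le_sum hS
  rw [weight_single, Nat.cast_one, one_mul, flowWeight_of_notMem hv] at hle
  refine Set.encard_ne_top_iff.mp (ne_top_of_le_ne_top (weight_ne_top fun p hp => ?_) hle)
  rw [flowWeight_of_mem (show p.1 ∈ S from (mem_supported _ _).mp hz hp)]
  exact ENat.one_ne_top

/-- The vertices outside `S` without flow paths form a hereditary set disjoint from `S`,
so a generator over such a vertex never expands into `S`. -/
theorem nonempty_flowSet_of_steps {v : V} (hv : v ∉ S) {i : ℤ}
    {z : FreeTal V} (h : Steps s r hrow (single (v, i) 1) z) (hz : z ∈ SupportedOver S) :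
    (flowSet s r S v).Nonempty := by
  by_contra hempty
  set Y := {u | u ∉ S ∧ ¬ (flowSet s r S u).Nonempty}
  have hY : Hereditary s r Y := by
    rintro e ⟨heS, he⟩
    have hr : r e ∉ S := fun hr => he ⟨[e], flowsTo_singleton heS hr⟩
    exact ⟨hr, fun ⟨l, hl⟩ => he ⟨e :: l, FlowsTo.cons hl⟩⟩
  have hzY := h.mem_supportedOver hY (single_mem_supportedOver_iff.mpr ⟨hv, hempty⟩)
  have hdisj : Disjoint (Prod.fst ⁻¹' S) (Prod.fst ⁻¹' Y : Set (V × ℤ)) :=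
    Set.disjoint_left.mpr fun _ hp hpY => hpY.1 hp
  rw [Submodule.disjoint_def.mp (disjoint_supported_supported hdisj) z hz hzY] at h
  exact single_ne_zero.mpr one_ne_zero (eq_zero_of_steps_zero h)

def expandable (s r : E → V) (hrow : ∀ v : V, {e : E | s e = v}.Finite) (S : Set V) :
    AddSubmonoid (FreeTal V) where
  carrier := {x | ∃ z, Steps s r hrow x z ∧ z ∈ SupportedOver S}
  zero_mem' := ⟨0, .refl, zero_mem _⟩
  add_mem' := fun ⟨z, hxz, hz⟩ ⟨z', hyz', hz'⟩ => ⟨z + z', hxz.add hyz', add_mem hz hz'⟩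

theorem single_mem_expandable {p : V × ℤ} (hp : p.1 ∈ S) :
    single p 1 ∈ expandable s r hrow S :=
  ⟨_, .refl, single_mem_supportedOver_iff.mpr hp⟩

/-- Expanding `v(i)` once and then each `r(e)(i+1)` with `r e ∉ S` recursively terminates,
since the flow paths from `r e` are strictly shorter than those from `v`. -/
theorem single_mem_expandable_of_length_le (hne : ∀ u ∉ S, (flowSet s r S u).Nonempty)
    (n : ℕ) : ∀ v : V, (∀ l ∈ flowSet s r S v, l.length ≤ n) → ∀ i : ℤ,
      single (v, i) 1 ∈ expandable s r hrow S := by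
  induction n with
  | zero =>
    intro v hlen i
    by_cases hv : v ∈ S
    · exact single_mem_expandable hv
    obtain ⟨l, hl⟩ := hne v hv
    cases List.length_eq_zero_iff.mp (Nat.le_zero.mp (hlen l hl))
    exact (not_flowsTo_nil hl).elim
  | succ n ih =>
    intro v hlen i
    by_cases hv : v ∈ S
    · exact single_mem_expandable hv
    obtain ⟨_ | ⟨e₀, l₀⟩, hl₀⟩ := hne v hv
    · exact (not_flowsTo_nil hl₀).elim
    have hstep : Step s r hrow (single (v, i) 1) (expand s r hrow v i) :=
      ⟨v, i, ⟨e₀, hl₀.1.elim fun _ hp => by cases hp; rfl⟩, le_rfl, by simp⟩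
    have htails : expand s r hrow v i ∈ expandable s r hrow S := by
      refine AddSubmonoid.sum_mem _ fun e he => ih (r e) (fun l hl => ?_) (i + 1)
      have hse : s e = v := (hrow v).mem_toFinset.mp he
      simpa using hlen (e :: l) (hse ▸ FlowsTo.cons hl)
    obtain ⟨z, hz, hzS⟩ := htails
    exact ⟨z, .head hstep hz, hzS⟩

theorem expandable_eq_top_iff (hS : Hereditary s r S) :
    expandable s r hrow S = ⊤ ↔
      ∀ v ∉ S, (flowSet s r S v).Finite ∧ (flowSet s r S v).Nonempty := by
  constructor
  · intro h v hv
    obtain ⟨z, hz, hzS⟩ : single (v, 0) 1 ∈ expandable s r hrow S := h ▸ trivial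
    exact ⟨finite_flowSet_of_steps hS hv hz hzS, nonempty_flowSet_of_steps hv hz hzS⟩
  · intro hflow
    have hsingle : ∀ p : V × ℤ, single p 1 ∈ expandable s r hrow S := by
      rintro ⟨v, i⟩
      by_cases hv : v ∈ S
      · exact single_mem_expandable hv
      obtain ⟨n, hn⟩ := ((hflow v hv).1.image List.length).bddAbove
      exact single_mem_expandable_of_length_le (fun u hu => (hflow u hu).2) n v
        (fun l hl => hn ⟨l, hl, rfl⟩) i
    refine eq_top_iff.mpr ?_
    rintro x -
    induction x using Finsupp.induction_linear with
    | zero => exact zero_mem _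
    | add x y hx hy => exact add_mem hx hy
    | single p n => simpa only [smul_single_one] using nsmul_mem (hsingle p) n

end Flows

theorem shiftTal_talGen (n : ℤ) (p : V × ℤ) :
    shiftTal s r hrow n (talGen s r hrow p) = talGen s r hrow (p.1, p.2 + n) := by
  simp [shiftTal, talGen, shiftFree, mapDomain_single]

theorem talGen_eq_sum {v : V} (hv : ∃ e, s e = v) (i : ℤ) :
    talGen s r hrow (v, i) = ∑ e ∈ (hrow v).toFinset, talGen s r hrow (r e, i + 1) := by
  have hstep : Step s r hrow (single (v, i) 1) (expand s r hrow v i) :=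
    ⟨v, i, hv, le_rfl, by simp⟩
  have h : (talCon s r hrow).mk' (single (v, i) 1) = (talCon s r hrow).mk' (expand s r hrow v i) :=
    (AddCon.eq _).mpr (talCon_of_step hstep)
  rw [talGen, h, expand, map_sum]
  rfl

theorem talGen_algLE_mk {x : FreeTal V} {p : V × ℤ} (hp : p ∈ x.support) :
    AlgLE (talGen s r hrow p) ((talCon s r hrow).mk' x) := by
  refine ⟨(talCon s r hrow).mk' (x - single p 1), ?_⟩
  rw [talGen, ← map_add, add_tsub_cancel_of_le]
  exact single_le_iff.mpr (Nat.one_le_iff_ne_zero.mpr (mem_support_iff.mp hp))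

/-- The paper's `I ∩ E⁰`. -/
def idealVertices (s r : E → V) (hrow : ∀ v : V, {e : E | s e = v}.Finite)
    (I : Set (TalMon s r hrow)) : Set V :=
  {v | talGen s r hrow (v, 0) ∈ I}

end TalentedMonoid

namespace IsZOrderIdeal

open TalentedMonoid

variable {s r : E → V} {hrow : ∀ v : V, {e : E | s e = v}.Finite} {I J : Set (TalMon s r hrow)}

def toAddSubmonoid (hI : IsZOrderIdeal s r hrow I) : AddSubmonoid (TalMon s r hrow) where
  carrier := I
  zero_mem' := hI.1
  add_mem' := hI.2.1 _ _

theorem talGen_mem_of_mem (hI : IsZOrderIdeal s r hrow I) {v : V} {i : ℤ}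
    (h : talGen s r hrow (v, i) ∈ I) (j : ℤ) : talGen s r hrow (v, j) ∈ I := by
  have := hI.2.2.2 (j - i) _ h
  rwa [shiftTal_talGen, add_sub_cancel] at this

theorem mem_supportedOver_of_mk_mem (hI : IsZOrderIdeal s r hrow I) {x : FreeTal V}
    (hx : (talCon s r hrow).mk' x ∈ I) : x ∈ SupportedOver (idealVertices s r hrow I) :=
  (mem_supported _ _).mpr fun _ hp =>
    hI.talGen_mem_of_mem (hI.2.2.1 _ _ hx (talGen_algLE_mk hp)) 0

theorem hereditary_idealVertices (hI : IsZOrderIdeal s r hrow I) :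
    Hereditary s r (idealVertices s r hrow I) := by
  classical
  intro e he
  have hle : AlgLE (talGen s r hrow (r e, 0 + 1)) (talGen s r hrow (s e, 0)) := by
    rw [talGen_eq_sum ⟨e, rfl⟩]
    exact ⟨_, (Finset.add_sum_erase _ _ ((hrow _).mem_toFinset.mpr rfl)).symm⟩
  exact hI.talGen_mem_of_mem (hI.2.2.1 _ _ he hle) 0

theorem saturated_idealVertices (hI : IsZOrderIdeal s r hrow I) :
    Saturated s r (idealVertices s r hrow I) := by
  intro v hv hall
  change talGen s r hrow (v, 0) ∈ I
  rw [talGen_eq_sum hv]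
  exact hI.toAddSubmonoid.sum_mem fun e he =>
    hI.talGen_mem_of_mem (hall e ((hrow v).mem_toFinset.mp he)) _

theorem idealVertices_nonempty (hI : IsZOrderIdeal s r hrow I) (hne : I ≠ {0}) :
    (idealVertices s r hrow I).Nonempty := by
  obtain ⟨a, ha, ha0⟩ : ∃ a ∈ I, a ≠ 0 := by
    by_contra! h
    exact hne (Set.eq_singleton_iff_unique_mem.mpr ⟨hI.1, h⟩)
  obtain ⟨x, rfl⟩ := AddCon.mk'_surjective a
  obtain ⟨p, hp⟩ : x.support.Nonempty :=
    support_nonempty_iff.mpr fun hx => ha0 (by rw [hx, map_zero])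
  exact ⟨p.1, hI.mem_supportedOver_of_mk_mem ha hp⟩

theorem idealVertices_inter_eq_empty (hIJ : I ∩ J = {0}) :
    idealVertices s r hrow I ∩ idealVertices s r hrow J = ∅ :=
  Set.eq_empty_of_forall_notMem fun v hv =>
    talGen_ne_zero s r hrow (v, 0) (hIJ ▸ hv : talGen s r hrow (v, 0) ∈ ({0} : Set _))

theorem expandable_eq_top (hI : IsZOrderIdeal s r hrow I) (hJ : IsZOrderIdeal s r hrow J)
    (hdec : ∀ x : TalMon s r hrow, ∃ a ∈ I, ∃ b ∈ J, x = a + b) :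
    expandable s r hrow (idealVertices s r hrow I ∪ idealVertices s r hrow J) = ⊤ := by
  refine eq_top_iff.mpr fun x _ => ?_
  obtain ⟨a, ha, b, hb, hab⟩ := hdec ((talCon s r hrow).mk' x)
  obtain ⟨xa, rfl⟩ := AddCon.mk'_surjective a
  obtain ⟨xb, rfl⟩ := AddCon.mk'_surjective b
  obtain ⟨z, hxz, habz⟩ := (mk_eq_mk_iff s r hrow).mp (hab.trans (map_add _ xa xb).symm)
  refine ⟨z, hxz, habz.mem_supportedOver
    (hI.hereditary_idealVertices.union hJ.hereditary_idealVertices) (add_mem ?_ ?_)⟩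
  · exact supported_mono (Set.preimage_mono Set.subset_union_left)
      (hI.mem_supportedOver_of_mk_mem ha)
  · exact supported_mono (Set.preimage_mono Set.subset_union_right)
      (hJ.mem_supportedOver_of_mk_mem hb)

end IsZOrderIdeal

namespace TalentedMonoid

variable {s r : E → V} {hrow : ∀ v : V, {e : E | s e = v}.Finite} {H K : Set V}

theorem talGen_mem_genIdeal {p : V × ℤ} (hp : p.1 ∈ H) :
    talGen s r hrow p ∈ genIdeal s r hrow H :=
  ⟨[p], by simpa using hp, ⟨0, by simp⟩⟩

theorem isZOrderIdeal_genIdeal (H : Set V) :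
    IsZOrderIdeal s r hrow (genIdeal s r hrow H) := by
  refine ⟨⟨[], by simp, ⟨0, by simp⟩⟩, ?_, ?_, ?_⟩
  · rintro a b ⟨l, hl, ha⟩ ⟨l', hl', hb⟩
    refine ⟨l ++ l', fun p hp => (List.mem_append.mp hp).elim (hl p) (hl' p), ?_⟩
    rw [List.map_append, List.sum_append]
    exact ha.add hb
  · rintro a b ⟨l, hl, hb⟩ hab
    exact ⟨l, hl, hab.trans hb⟩
  · rintro n x ⟨l, hl, hx⟩
    refine ⟨l.map fun p => (p.1, p.2 + n), fun p hp => ?_, ?_⟩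
    · obtain ⟨q, hq, rfl⟩ := List.mem_map.mp hp
      exact hl q hq
    have hcomm : shiftTal s r hrow n ∘ talGen s r hrow =
        talGen s r hrow ∘ fun p : V × ℤ => (p.1, p.2 + n) :=
      funext (shiftTal_talGen n)
    rw [List.map_map, ← hcomm, ← List.map_map, ← map_list_sum]
    exact hx.map _

theorem mk_mem_genIdeal {x : FreeTal V} (hx : x ∈ SupportedOver H) :
    (talCon s r hrow).mk' x ∈ genIdeal s r hrow H := by
  rw [← sum_single x, Finsupp.sum, map_sum]
  refine (isZOrderIdeal_genIdeal H).toAddSubmonoid.sum_mem fun p hp => ?_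
  rw [← smul_single_one, map_nsmul]
  exact (isZOrderIdeal_genIdeal H).toAddSubmonoid.nsmul_mem
    (talGen_mem_genIdeal (show p.1 ∈ H from (mem_supported _ _).mp hx hp)) _

theorem mem_expandable_of_mk_mem_genIdeal (hH : Hereditary s r H) {x : FreeTal V}
    (hx : (talCon s r hrow).mk' x ∈ genIdeal s r hrow H) : x ∈ expandable s r hrow H := by
  obtain ⟨l, hl, hle⟩ := hx
  have hy : (l.map (talGen s r hrow)).sum = (talCon s r hrow).mk' (l.map (single · 1)).sum := by
    rw [map_list_sum, List.map_map]
    rfl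
  have hyH : (l.map (single · 1)).sum ∈ SupportedOver H :=
    list_sum_mem fun _ hy => by
      obtain ⟨p, hp, rfl⟩ := List.mem_map.mp hy
      exact single_mem_supportedOver_iff.mpr (hl p hp)
  rw [hy] at hle
  obtain ⟨x', d, hxx', hyx'⟩ := exists_steps_of_algLE_mk hle
  exact ⟨x', hxx', mem_supportedOver_of_le le_self_add (hyx'.mem_supportedOver hH hyH)⟩

theorem genIdeal_inter_genIdeal (hH : Hereditary s r H) (hK : Hereditary s r K)
    (hHK : H ∩ K = ∅) : genIdeal s r hrow H ∩ genIdeal s r hrow K = {0} := by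
  refine Set.eq_singleton_iff_unique_mem.mpr
    ⟨⟨(isZOrderIdeal_genIdeal H).1, (isZOrderIdeal_genIdeal K).1⟩, ?_⟩
  rintro a ⟨haH, haK⟩
  obtain ⟨x, rfl⟩ := AddCon.mk'_surjective a
  obtain ⟨y, hxy, hy⟩ := mem_expandable_of_mk_mem_genIdeal hH haH
  obtain ⟨y', hxy', hy'⟩ := mem_expandable_of_mk_mem_genIdeal hK haK
  obtain ⟨w, hyw, hy'w⟩ := hxy.join hxy'
  have hdisj : Disjoint (Prod.fst ⁻¹' H) (Prod.fst ⁻¹' K : Set (V × ℤ)) := by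
    rw [Set.disjoint_iff_inter_eq_empty, ← Set.preimage_inter, hHK, Set.preimage_empty]
  have hw : w = 0 := Submodule.disjoint_def.mp (disjoint_supported_supported hdisj) w
    (hyw.mem_supportedOver hH hy) (hy'w.mem_supportedOver hK hy')
  have hx0 : x = 0 := eq_zero_of_steps_zero (hw ▸ hxy.trans hyw)
  rw [hx0, map_zero]

theorem genIdeal_ne_singleton_zero (hH : H.Nonempty) : genIdeal s r hrow H ≠ {0} := by
  obtain ⟨v, hv⟩ := hH
  intro h
  exact talGen_ne_zero s r hrow (v, 0)
    (h ▸ talGen_mem_genIdeal hv : talGen s r hrow (v, 0) ∈ ({0} : Set _))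

theorem exists_add_of_expandable_eq_top (h : expandable s r hrow (H ∪ K) = ⊤)
    (x : TalMon s r hrow) : ∃ a ∈ genIdeal s r hrow H, ∃ b ∈ genIdeal s r hrow K, x = a + b := by
  obtain ⟨x, rfl⟩ := AddCon.mk'_surjective x
  obtain ⟨z, hxz, hz⟩ : x ∈ expandable s r hrow (H ∪ K) := h ▸ AddSubmonoid.mem_top x
  rw [SupportedOver, Set.preimage_union, supported_union, Submodule.mem_sup] at hz
  obtain ⟨zH, hzH, zK, hzK, rfl⟩ := hz
  refine ⟨_, mk_mem_genIdeal hzH, _, mk_mem_genIdeal hzK, ?_⟩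
  rw [← map_add]
  exact (mk_eq_mk_iff s r hrow).mpr ⟨_, hxz, .refl⟩

end TalentedMonoid

open TalentedMonoid in
theorem stmt_19 {V E : Type*} (s r : E → V)
    (hrow : ∀ v : V, {e : E | s e = v}.Finite) :
    (∃ I J : Set (TalMon s r hrow),
        IsZOrderIdeal s r hrow I ∧ IsZOrderIdeal s r hrow J ∧
        I ≠ {0} ∧ J ≠ {0} ∧
        (∀ x : TalMon s r hrow, ∃ a ∈ I, ∃ b ∈ J, x = a + b) ∧ I ∩ J = {0}) ↔
      (∃ H K : Set V,
        Hereditary s r H ∧ Saturated s r H ∧ Hereditary s r K ∧ Saturated s r K ∧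
        H.Nonempty ∧ K.Nonempty ∧ H ∩ K = ∅ ∧
        ∀ v : V, v ∉ H ∪ K →
          ({l : List E | FlowsTo s r (H ∪ K) v l}.Finite ∧
            {l : List E | FlowsTo s r (H ∪ K) v l}.Nonempty)) := by
  constructor
  · rintro ⟨I, J, hI, hJ, hI0, hJ0, hdec, hIJ⟩
    have hunion := hI.hereditary_idealVertices.union hJ.hereditary_idealVertices
    exact ⟨_, _, hI.hereditary_idealVertices, hI.saturated_idealVertices,
      hJ.hereditary_idealVertices, hJ.saturated_idealVertices,
      hI.idealVertices_nonempty hI0, hJ.idealVertices_nonempty hJ0,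
      IsZOrderIdeal.idealVertices_inter_eq_empty hIJ,
      (expandable_eq_top_iff hunion).mp (hI.expandable_eq_top hJ hdec)⟩
  · rintro ⟨H, K, hH, -, hK, -, hHne, hKne, hHK, hflow⟩
    exact ⟨genIdeal s r hrow H, genIdeal s r hrow K,
      isZOrderIdeal_genIdeal H, isZOrderIdeal_genIdeal K,
      genIdeal_ne_singleton_zero hHne, genIdeal_ne_singleton_zero hKne,
      exists_add_of_expandable_eq_top ((expandable_eq_top_iff (hH.union hK)).mpr hflow),
      genIdeal_inter_genIdeal hH hK hHK⟩
end
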